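/- arXiv:2509.18746 — 2 statements merged into one kernel-verified Lean document; each statement's English description precedes it below -/
import Mathlib

section
/- Let 0 < β < α < 1 be real numbers, let a be a real number with a ≠ -1, let b be a complex number, and let x : ℕ → ℂ be a sequence. Then the following are equivalent: (i) for every integer n ≥ 1, (1/Γ(1-α))·( Σ_{s=0}^{n} (Γ(n-s+1-α)/Γ(n-s+1))·x(s) − Σ_{s=0}^{n-1} (Γ(n-s-α)/Γ(n-s))·x(s) ) + (a/Γ(1-β))·( Σ_{s=0}^{n} (Γ(n-s+1-β)/Γ(n-s+1))·x(s) − Σ_{s=0}^{n-1} (Γ(n-s-β)/Γ(n-s))·x(s) ) = (b-1)·x(n-1); (ii) for every integer n ≥ 1, x(n) = ((α + a·β + b − 1)/(a+1))·x(n-1) + (1/(a+1))·Σ_{s=0}^{n-2} (1/(n-s)!)·( α·Γ(n-s-α)/Γ(1-α) + a·β·Γ(n-s-β)/Γ(1-β) )·x(s). -/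
open Finset

private lemma gamma_step_aux (γ : ℝ) (hγ : γ < 1) (m : ℕ) (hm : 1 ≤ m) :
    Real.Gamma ((m : ℝ) + 1 - γ) / Real.Gamma ((m : ℝ) + 1)
      - Real.Gamma ((m : ℝ) - γ) / Real.Gamma (m : ℝ)
    = -γ * Real.Gamma ((m : ℝ) - γ) / (Nat.factorial m) := by
  have hm1 : (1 : ℝ) ≤ (m : ℝ) := by exact_mod_cast hm
  have h1 : (m : ℝ) - γ ≠ 0 := by nlinarith
  have hg1 : Real.Gamma ((m : ℝ) + 1 - γ) = ((m : ℝ) - γ) * Real.Gamma ((m : ℝ) - γ) := by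
    have := Real.Gamma_add_one h1
    rw [show (m : ℝ) + 1 - γ = (m : ℝ) - γ + 1 by ring, this]
  have hg2 : Real.Gamma ((m : ℝ) + 1) = (Nat.factorial m : ℝ) := by
    exact_mod_cast Real.Gamma_nat_eq_factorial m
  obtain ⟨k, rfl⟩ : ∃ k, m = k + 1 := ⟨m - 1, by omega⟩
  have hg3 : Real.Gamma ((k + 1 : ℕ) : ℝ) = (Nat.factorial k : ℝ) := by
    have := Real.Gamma_nat_eq_factorial k
    push_cast at this ⊢
    convert this using 2 <;> push_cast <;> ring
  have hfac : (Nat.factorial (k + 1) : ℝ) = ((k + 1 : ℕ) : ℝ) * (Nat.factorial k : ℝ) := by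
    rw [Nat.factorial_succ]; push_cast; ring
  have hk0 : (Nat.factorial k : ℝ) ≠ 0 := by exact_mod_cast (Nat.factorial_ne_zero k)
  have hmk : ((k + 1 : ℕ) : ℝ) ≠ 0 := by positivity
  rw [hg1, hg2, hg3, hfac]
  field_simp
  ring

private lemma part_lemma (γ : ℝ) (hγ0 : 0 < γ) (hγ1 : γ < 1) (x : ℕ → ℂ) (n : ℕ) (hn : 1 ≤ n) :
    ((1 / Real.Gamma (1 - γ) : ℝ) : ℂ) *
      ((∑ s ∈ Finset.range (n + 1),
          ((Real.Gamma ((n : ℝ) - s + 1 - γ) / Real.Gamma ((n : ℝ) - s + 1) : ℝ) : ℂ) * x s)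
        - ∑ s ∈ Finset.range n,
            ((Real.Gamma ((n : ℝ) - s - γ) / Real.Gamma ((n : ℝ) - s) : ℝ) : ℂ) * x s)
    = x n - ∑ s ∈ Finset.range n,
        ((γ * Real.Gamma ((n : ℝ) - s - γ) / (Real.Gamma (1 - γ) * (Nat.factorial (n - s))) : ℝ) : ℂ)
          * x s := by
  have hGpos : 0 < Real.Gamma (1 - γ) := Real.Gamma_pos_of_pos (by linarith)
  have hG : Real.Gamma (1 - γ) ≠ 0 := ne_of_gt hGpos
  rw [Finset.sum_range_succ]
  have hlast : ((Real.Gamma ((n : ℝ) - n + 1 - γ) / Real.Gamma ((n : ℝ) - n + 1) : ℝ) : ℂ)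
      = ((Real.Gamma (1 - γ) : ℝ) : ℂ) := by
    rw [show (n : ℝ) - n + 1 - γ = 1 - γ by ring, show (n : ℝ) - n + 1 = 1 by ring,
      Real.Gamma_one, div_one]
  rw [hlast]
  have key : ∀ s ∈ Finset.range n,
      ((1 / Real.Gamma (1 - γ) : ℝ) : ℂ) *
        (((Real.Gamma ((n : ℝ) - s + 1 - γ) / Real.Gamma ((n : ℝ) - s + 1) : ℝ) : ℂ) * x s
          - ((Real.Gamma ((n : ℝ) - s - γ) / Real.Gamma ((n : ℝ) - s) : ℝ) : ℂ) * x s)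
      = -(((γ * Real.Gamma ((n : ℝ) - s - γ)
            / (Real.Gamma (1 - γ) * (Nat.factorial (n - s))) : ℝ) : ℂ) * x s) := by
    intro s hs
    have hsn : s < n := Finset.mem_range.mp hs
    have hm : 1 ≤ n - s := by omega
    have hcast : (n : ℝ) - s = ((n - s : ℕ) : ℝ) := by
      push_cast [Nat.cast_sub (le_of_lt hsn)]; ring
    rw [hcast]
    have hreal : (1 / Real.Gamma (1 - γ)) *
        (Real.Gamma (((n - s : ℕ) : ℝ) + 1 - γ) / Real.Gamma (((n - s : ℕ) : ℝ) + 1)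
          - Real.Gamma (((n - s : ℕ) : ℝ) - γ) / Real.Gamma ((n - s : ℕ) : ℝ))
        = -(γ * Real.Gamma (((n - s : ℕ) : ℝ) - γ)
            / (Real.Gamma (1 - γ) * (Nat.factorial (n - s)))) := by
      rw [gamma_step_aux γ hγ1 (n - s) hm]
      have hf : (Nat.factorial (n - s) : ℝ) ≠ 0 := by
        exact_mod_cast Nat.factorial_ne_zero (n - s)
      field_simp
    have hC := congrArg (fun r : ℝ => (r : ℂ)) hreal
    push_cast at hC ⊢
    linear_combination x s * hC
  have h2 : ((1 / Real.Gamma (1 - γ) : ℝ) : ℂ) *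
      ((∑ s ∈ Finset.range n,
          ((Real.Gamma ((n : ℝ) - s + 1 - γ) / Real.Gamma ((n : ℝ) - s + 1) : ℝ) : ℂ) * x s)
        - ∑ s ∈ Finset.range n,
            ((Real.Gamma ((n : ℝ) - s - γ) / Real.Gamma ((n : ℝ) - s) : ℝ) : ℂ) * x s)
      = -∑ s ∈ Finset.range n,
          ((γ * Real.Gamma ((n : ℝ) - s - γ)
            / (Real.Gamma (1 - γ) * (Nat.factorial (n - s))) : ℝ) : ℂ) * x s := by
    rw [← Finset.sum_sub_distrib, Finset.mul_sum, Finset.sum_congr rfl key, Finset.sum_neg_distrib]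
  have h3 : ((1 / Real.Gamma (1 - γ) : ℝ) : ℂ) * ((Real.Gamma (1 - γ) : ℝ) : ℂ) = 1 := by
    push_cast
    rw [one_div, inv_mul_cancel₀ (Complex.ofReal_ne_zero.mpr hG)]
  linear_combination h2 + x n * h3

/-- Equivalence between the explicit form of the two-term fractional difference
equation and its sequence (recurrence) representation. -/
theorem two_term_fde_sequence_representation
    (α β a : ℝ) (b : ℂ) (x : ℕ → ℂ)
    (hβ : 0 < β) (hβα : β < α) (hα : α < 1) (ha : a ≠ -1) :
    (∀ n : ℕ, 1 ≤ n →
      ((1 / Real.Gamma (1 - α) : ℝ) : ℂ) *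
        ((∑ s ∈ Finset.range (n + 1),
            ((Real.Gamma ((n : ℝ) - s + 1 - α) / Real.Gamma ((n : ℝ) - s + 1) : ℝ) : ℂ) * x s)
          - ∑ s ∈ Finset.range n,
              ((Real.Gamma ((n : ℝ) - s - α) / Real.Gamma ((n : ℝ) - s) : ℝ) : ℂ) * x s)
      + ((a / Real.Gamma (1 - β) : ℝ) : ℂ) *
        ((∑ s ∈ Finset.range (n + 1),
            ((Real.Gamma ((n : ℝ) - s + 1 - β) / Real.Gamma ((n : ℝ) - s + 1) : ℝ) : ℂ) * x s)
          - ∑ s ∈ Finset.range n,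
              ((Real.Gamma ((n : ℝ) - s - β) / Real.Gamma ((n : ℝ) - s) : ℝ) : ℂ) * x s)
      = (b - 1) * x (n - 1))
    ↔
    (∀ n : ℕ, 1 ≤ n →
      x n = (((α : ℂ) + (a : ℂ) * (β : ℂ) + (b - 1)) / ((a : ℂ) + 1)) * x (n - 1)
        + (1 / ((a : ℂ) + 1)) *
            ∑ s ∈ Finset.range (n - 1),
              ((1 / (Nat.factorial (n - s)) : ℝ) : ℂ) *
                ((α * Real.Gamma ((n : ℝ) - s - α) / Real.Gamma (1 - α)
                  + a * β * Real.Gamma ((n : ℝ) - s - β) / Real.Gamma (1 - β) : ℝ) : ℂ) * x s) := by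
  have hGa : Real.Gamma (1 - α) ≠ 0 := ne_of_gt (Real.Gamma_pos_of_pos (by linarith))
  have hGb : Real.Gamma (1 - β) ≠ 0 := ne_of_gt (Real.Gamma_pos_of_pos (by linarith))
  have ha1 : (a : ℂ) + 1 ≠ 0 := by
    intro h
    apply ha
    have : (a : ℂ) = -1 := by linear_combination h
    exact_mod_cast this
  refine forall_congr' fun n => imp_congr_right fun hn => ?_
  obtain ⟨k, rfl⟩ : ∃ k, n = k + 1 := ⟨n - 1, by omega⟩
  have hsplit : ((a / Real.Gamma (1 - β) : ℝ) : ℂ)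
      = (a : ℂ) * ((1 / Real.Gamma (1 - β) : ℝ) : ℂ) := by push_cast; ring
  rw [hsplit, mul_assoc, part_lemma α (by linarith) hα x (k + 1) (by omega),
    part_lemma β hβ (by linarith) x (k + 1) (by omega)]
  simp only [Nat.add_sub_cancel]
  rw [Finset.sum_range_succ, Finset.sum_range_succ]
  have hclast : ∀ γ : ℝ, 0 < γ → γ < 1 →
      ((γ * Real.Gamma (((k + 1 : ℕ) : ℝ) - (k : ℝ) - γ)
        / (Real.Gamma (1 - γ) * (Nat.factorial (k + 1 - k))) : ℝ) : ℂ) = (γ : ℂ) := by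
    intro γ hγ0 hγ1
    have hG : Real.Gamma (1 - γ) ≠ 0 := ne_of_gt (Real.Gamma_pos_of_pos (by linarith))
    rw [show ((k + 1 : ℕ) : ℝ) - (k : ℝ) - γ = 1 - γ by push_cast; ring,
      show k + 1 - k = 1 by omega]
    norm_num [Nat.factorial]
    rw [mul_div_assoc, div_self (Complex.ofReal_ne_zero.mpr hG), mul_one]
  rw [hclast α (by linarith) hα, hclast β hβ (by linarith)]
  have hD : (∑ s ∈ Finset.range k,
        ((α * Real.Gamma (((k + 1 : ℕ) : ℝ) - s - α)
          / (Real.Gamma (1 - α) * (Nat.factorial (k + 1 - s))) : ℝ) : ℂ) * x s)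
      + (a : ℂ) * ∑ s ∈ Finset.range k,
        ((β * Real.Gamma (((k + 1 : ℕ) : ℝ) - s - β)
          / (Real.Gamma (1 - β) * (Nat.factorial (k + 1 - s))) : ℝ) : ℂ) * x s
      = ∑ s ∈ Finset.range k,
          ((1 / (Nat.factorial (k + 1 - s)) : ℝ) : ℂ) *
            ((α * Real.Gamma (((k + 1 : ℕ) : ℝ) - s - α) / Real.Gamma (1 - α)
              + a * β * Real.Gamma (((k + 1 : ℕ) : ℝ) - s - β) / Real.Gamma (1 - β) : ℝ) : ℂ)
            * x s := by
    rw [Finset.mul_sum, ← Finset.sum_add_distrib]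
    refine Finset.sum_congr rfl fun s hs => ?_
    have hf : ((Nat.factorial (k + 1 - s) : ℝ) : ℂ) ≠ 0 := by
      exact_mod_cast Nat.factorial_ne_zero (k + 1 - s)
    have hf' : (Nat.factorial (k + 1 - s) : ℝ) ≠ 0 := by
      exact_mod_cast Nat.factorial_ne_zero (k + 1 - s)
    have hr : α * Real.Gamma (((k + 1 : ℕ) : ℝ) - s - α)
          / (Real.Gamma (1 - α) * (Nat.factorial (k + 1 - s)))
        + a * (β * Real.Gamma (((k + 1 : ℕ) : ℝ) - s - β)
          / (Real.Gamma (1 - β) * (Nat.factorial (k + 1 - s))))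
        = (1 / (Nat.factorial (k + 1 - s) : ℝ)) *
            (α * Real.Gamma (((k + 1 : ℕ) : ℝ) - s - α) / Real.Gamma (1 - α)
              + a * β * Real.Gamma (((k + 1 : ℕ) : ℝ) - s - β) / Real.Gamma (1 - β)) := by
      field_simp
    have hC := congrArg (fun r : ℝ => (r : ℂ)) hr
    push_cast at hC ⊢
    linear_combination x s * hC
  rw [← hD]
  have key2 : ∀ X Y Sa Sb : ℂ,
      (X - (Sa + (α : ℂ) * Y) + (a : ℂ) * (X - (Sb + (β : ℂ) * Y)) = (b - 1) * Y
        ↔ X = (((α : ℂ) + (a : ℂ) * (β : ℂ) + (b - 1)) / ((a : ℂ) + 1)) * Y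
            + (1 / ((a : ℂ) + 1)) * (Sa + (a : ℂ) * Sb)) := by
    intro X Y Sa Sb
    constructor
    · intro h
      field_simp
      linear_combination h
    · intro h
      field_simp at h
      linear_combination h
  exact key2 _ _ _ _
end

section
/- Let α, β be real numbers with 0 < β < α ≤ 1 and let 0 < θ < π. Define N(θ) = sin((−θ(α−3) + πα)/2) + (α−1)·sin((θ + πα − θα)/2) and D(θ) = sin((−θ(β−3) + πβ)/2) + (β−1)·sin((θ + πβ − θβ)/2). If D(θ) ≠ 0, then for a real parameter a the cusp equation G(θ) = 0 holds if and only if a = −2^{α−β}·(sin(θ/2))^{α−β}·N(θ)/D(θ). In other words, the third bifurcation value is a₃ = −2^{α−β}·(sin(θ/2))^{α−β}·[sin((−θ(α−3)+πα)/2) + (α−1)·sin((θ+πα−θα)/2)] / [sin((−θ(β−3)+πβ)/2) + (β−1)·sin((θ+πβ−θβ)/2)]. -/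
/-- G(θ) = γ₂'(θ), the derivative of the imaginary part of the boundary curve. -/
noncomputable def G (a α β θ : ℝ) : ℝ :=
  (2 : ℝ) ^ α * (1 - α / 2) * Real.cos (α * (Real.pi - θ) / 2 + θ) * Real.sin (θ / 2) ^ α
    + (2 : ℝ) ^ β * a * (1 - β / 2) * Real.cos (β * (Real.pi - θ) / 2 + θ) * Real.sin (θ / 2) ^ β
    + (2 : ℝ) ^ (α - 1) * α * Real.cos (θ / 2) * Real.sin (θ / 2) ^ (α - 1) *
        Real.sin (α * (Real.pi - θ) / 2 + θ)
    + (2 : ℝ) ^ (β - 1) * a * β * Real.cos (θ / 2) * Real.sin (θ / 2) ^ (β - 1) *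
        Real.sin (β * (Real.pi - θ) / 2 + θ)

/-!
Each order `γ ∈ {α, β}` contributes to `G` the term
`(2 sin(θ/2))^(γ-1) · (γ cos(θ/2) sin φ + (2-γ) sin(θ/2) cos φ)` with `φ = γ(π-θ)/2 + θ`,
and expanding `sin(φ ± θ/2)` identifies the bracket with the paper's `N(θ)` (for `γ = α`)
and `D(θ)` (for `γ = β`). Hence `G = w^(α-1) N + a w^(β-1) D` with `w = 2 sin(θ/2) > 0`,
which is linear in `a` and is solved by `a = -w^(α-β) N / D`.
-/

open Real

/-- `N(θ)` of the paper is `cuspTerm α θ` and `D(θ)` is `cuspTerm β θ`. -/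
noncomputable def cuspTerm (γ θ : ℝ) : ℝ :=
  sin ((-(θ * (γ - 3)) + π * γ) / 2) + (γ - 1) * sin ((θ + π * γ - θ * γ) / 2)

theorem cuspTerm_eq (γ θ : ℝ) :
    cuspTerm γ θ = γ * cos (θ / 2) * sin (γ * (π - θ) / 2 + θ)
      + (2 - γ) * sin (θ / 2) * cos (γ * (π - θ) / 2 + θ) := by
  have hplus : (-(θ * (γ - 3)) + π * γ) / 2 = (γ * (π - θ) / 2 + θ) + θ / 2 := by ring
  have hminus : (θ + π * γ - θ * γ) / 2 = (γ * (π - θ) / 2 + θ) - θ / 2 := by ring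
  rw [cuspTerm, hplus, hminus, sin_add, sin_sub]
  ring

theorem two_rpow_mul_add_eq_mul_cuspTerm {θ : ℝ} (hs : 0 < sin (θ / 2)) (γ : ℝ) :
    (2 : ℝ) ^ γ * (1 - γ / 2) * cos (γ * (π - θ) / 2 + θ) * sin (θ / 2) ^ γ
      + (2 : ℝ) ^ (γ - 1) * γ * cos (θ / 2) * sin (θ / 2) ^ (γ - 1) * sin (γ * (π - θ) / 2 + θ)
      = (2 * sin (θ / 2)) ^ (γ - 1) * cuspTerm γ θ := by
  have hpow : (2 : ℝ) ^ γ * sin (θ / 2) ^ γ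
      = (2 : ℝ) ^ (γ - 1) * sin (θ / 2) ^ (γ - 1) * (2 * sin (θ / 2)) := by
    rw [← mul_rpow zero_le_two hs.le, ← mul_rpow zero_le_two hs.le,
      ← rpow_add_one (by positivity), sub_add_cancel]
  rw [cuspTerm_eq, mul_rpow zero_le_two hs.le]
  linear_combination (1 - γ / 2) * cos (γ * (π - θ) / 2 + θ) * hpow

theorem G_eq_rpow_mul_cuspTerm (a α β : ℝ) {θ : ℝ} (hs : 0 < sin (θ / 2)) :
    G a α β θ = (2 * sin (θ / 2)) ^ (α - 1) * cuspTerm α θ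
      + a * ((2 * sin (θ / 2)) ^ (β - 1) * cuspTerm β θ) := by
  rw [← two_rpow_mul_add_eq_mul_cuspTerm hs, ← two_rpow_mul_add_eq_mul_cuspTerm hs, G]
  ring

theorem add_mul_mul_eq_zero_iff {K : Type*} [Field K] {p q n d a : K} (hq : q ≠ 0)
    (hd : d ≠ 0) : p * n + a * (q * d) = 0 ↔ a = -(p / q) * n / d := by
  rw [eq_div_iff hd, neg_mul, div_mul_eq_mul_div, eq_neg_iff_add_eq_zero,
    add_div' _ _ _ hq, div_eq_zero_iff, or_iff_left hq]
  constructor <;> intro h <;> linear_combination h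

theorem third_bifurcation_value_general (α β θ a : ℝ)
    (h0 : 0 < θ) (hπ : θ < Real.pi)
    (hD : Real.sin ((-(θ * (β - 3)) + Real.pi * β) / 2)
        + (β - 1) * Real.sin ((θ + Real.pi * β - θ * β) / 2) ≠ 0) :
    G a α β θ = 0 ↔
      a = -(2 : ℝ) ^ (α - β) * Real.sin (θ / 2) ^ (α - β) *
            (Real.sin ((-(θ * (α - 3)) + Real.pi * α) / 2)
              + (α - 1) * Real.sin ((θ + Real.pi * α - θ * α) / 2))
          / (Real.sin ((-(θ * (β - 3)) + Real.pi * β) / 2)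
              + (β - 1) * Real.sin ((θ + Real.pi * β - θ * β) / 2)) := by
  have hs : 0 < sin (θ / 2) := sin_pos_of_pos_of_lt_pi (by linarith) (by linarith)
  have hw : 0 < 2 * sin (θ / 2) := by positivity
  have hratio : (2 : ℝ) ^ (α - β) * sin (θ / 2) ^ (α - β)
      = (2 * sin (θ / 2)) ^ (α - 1) / (2 * sin (θ / 2)) ^ (β - 1) := by
    rw [← mul_rpow zero_le_two hs.le, ← rpow_sub hw, sub_sub_sub_cancel_right]
  change _ ↔ a = -(2 : ℝ) ^ (α - β) * sin (θ / 2) ^ (α - β) * cuspTerm α θ / cuspTerm β θ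
  rw [G_eq_rpow_mul_cuspTerm a α β hs, neg_mul, hratio,
    add_mul_mul_eq_zero_iff (d := cuspTerm β θ) (rpow_pos_of_pos hw _).ne' hD]

/-- For 0 < θ < π, provided the denominator D(θ) ≠ 0, the cusp equation G(θ) = 0
holds if and only if a has the value a₃ given in the paper. -/
theorem third_bifurcation_value (α β θ a : ℝ)
    (hβ : 0 < β) (hβα : β < α) (hα : α ≤ 1) (h0 : 0 < θ) (hπ : θ < Real.pi)
    (hD : Real.sin ((-(θ * (β - 3)) + Real.pi * β) / 2)
        + (β - 1) * Real.sin ((θ + Real.pi * β - θ * β) / 2) ≠ 0) :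
    G a α β θ = 0 ↔
      a = -(2 : ℝ) ^ (α - β) * Real.sin (θ / 2) ^ (α - β) *
            (Real.sin ((-(θ * (α - 3)) + Real.pi * α) / 2)
              + (α - 1) * Real.sin ((θ + Real.pi * α - θ * α) / 2))
          / (Real.sin ((-(θ * (β - 3)) + Real.pi * β) / 2)
              + (β - 1) * Real.sin ((θ + Real.pi * β - θ * β) / 2)) :=
  third_bifurcation_value_general α β θ a h0 hπ hD
end
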